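/- Let (S,h) be a Riemannian 3-manifold with Killing vector field η^a that is hypersurface orthogonal (i.e. D_a η_b = −η_{[a} D_{b]} ln η where η = η^a η_a > 0). Let Ψ^a be a vector field with L_η Ψ^a = 0, Ψ^a η_a = 0, and D_a Ψ^a = 0. Then the tensor Ψ^{ab} = (2/η) Ψ^{(a} η^{b)} is symmetric, trace-free (h_{ab}Ψ^{ab} = 0), and divergence-free (D_a Ψ^{ab} = 0). -/

import Mathlib

open Metric Real

noncomputable section

abbrev E3 := EuclideanSpace ℝ (Fin 3)

/-- Partial derivative ∂_i f at x. -/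
noncomputable def pd (f : E3 → ℝ) (i : Fin 3) (x : E3) : ℝ :=
  fderiv ℝ f x (EuclideanSpace.single i 1)


lemma pd_congr {f g : E3 → ℝ} {x : E3} (hfg : f =ᶠ[nhds x] g) (i : Fin 3) :
    pd f i x = pd g i x := by unfold pd; rw [hfg.fderiv_eq]

lemma pd_mul {f g : E3 → ℝ} {x : E3} (hf : DifferentiableAt ℝ f x)
    (hg : DifferentiableAt ℝ g x) (i : Fin 3) :
    pd (fun y => f y * g y) i x = pd f i x * g x + f x * pd g i x := by
  unfold pd
  rw [fderiv_fun_mul hf hg]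
  simp
  ring

lemma pd_add {f g : E3 → ℝ} {x : E3} (hf : DifferentiableAt ℝ f x)
    (hg : DifferentiableAt ℝ g x) (i : Fin 3) :
    pd (fun y => f y + g y) i x = pd f i x + pd g i x := by
  unfold pd
  rw [fderiv_fun_add hf hg]
  simp

lemma sum3_congr {f g : Fin 3 → ℝ} (h : ∀ d, f d = g d) : ∑ d, f d = ∑ d, g d :=
  Finset.sum_congr rfl fun d _ => h d

lemma pd_sum {f : Fin 3 → E3 → ℝ} {x : E3} (hf : ∀ j, DifferentiableAt ℝ (f j) x)
    (i : Fin 3) : pd (fun y => ∑ j, f j y) i x = ∑ j, pd (f j) i x := by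
  unfold pd
  rw [fderiv_fun_sum (fun j _ => hf j)]
  simp

lemma pd_inv {g : E3 → ℝ} {x : E3} (hg : DifferentiableAt ℝ g x) (hgx : g x ≠ 0)
    (i : Fin 3) : pd (fun y => (g y)⁻¹) i x = -pd g i x / (g x)^2 := by
  unfold pd
  have H := ((hasFDerivAt_inv' (𝕜 := ℝ) hgx).comp x hg.hasFDerivAt).fderiv
  rw [show (fun y => (g y)⁻¹) = Inv.inv ∘ g from rfl, H]
  simp only [ContinuousLinearMap.comp_apply, ContinuousLinearMap.neg_apply,
    ContinuousLinearMap.mulLeftRight_apply]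
  ring

lemma pd_div {f g : E3 → ℝ} {x : E3} (hf : DifferentiableAt ℝ f x)
    (hg : DifferentiableAt ℝ g x) (hgx : g x ≠ 0) (i : Fin 3) :
    pd (fun y => f y / g y) i x = (pd f i x * g x - f x * pd g i x) / (g x)^2 := by
  have h1 : (fun y => f y / g y) = fun y => f y * (g y)⁻¹ := by
    funext y; rw [div_eq_mul_inv]
  have h2 : DifferentiableAt ℝ (fun y => (g y)⁻¹) x := (differentiableAt_inv hgx).comp x hg
  rw [h1, pd_mul hf h2 i, pd_inv hg hgx i]
  field_simp
  ring

lemma pd_log {f : E3 → ℝ} {x : E3} (hf : DifferentiableAt ℝ f x) (hfx : f x ≠ 0)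
    (i : Fin 3) : pd (fun y => Real.log (f y)) i x = pd f i x / f x := by
  unfold pd
  rw [((hf.hasFDerivAt).log hfx).fderiv]
  simp [div_eq_inv_mul]

/-- Christoffel symbols Γ^a_{bc} of the metric h (with inverse hinv). -/
noncomputable def Γ (h hinv : E3 → Fin 3 → Fin 3 → ℝ) (a b c : Fin 3) (x : E3) : ℝ :=
  (1 / 2) * ∑ d, hinv x a d *
    (pd (fun y => h y d c) b x + pd (fun y => h y b d) c x - pd (fun y => h y b c) d x)

/-- Covariant derivative D_a v^b of a vector field. -/
noncomputable def covV (h hinv : E3 → Fin 3 → Fin 3 → ℝ) (v : E3 → Fin 3 → ℝ)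
    (a b : Fin 3) (x : E3) : ℝ :=
  pd (fun y => v y b) a x + ∑ c, Γ h hinv b a c x * v x c

/-- Covariant derivative D_a w_b of a covector field. -/
noncomputable def covC (h hinv : E3 → Fin 3 → Fin 3 → ℝ) (w : E3 → Fin 3 → ℝ)
    (a b : Fin 3) (x : E3) : ℝ :=
  pd (fun y => w y b) a x - ∑ c, Γ h hinv c a b x * w x c

/-- Covariant derivative D_c T^{ab} of a (2,0)-tensor field. -/
noncomputable def covT2 (h hinv : E3 → Fin 3 → Fin 3 → ℝ) (T : E3 → Fin 3 → Fin 3 → ℝ)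
    (c a b : Fin 3) (x : E3) : ℝ :=
  pd (fun y => T y a b) c x + ∑ d, Γ h hinv a c d x * T x d b
    + ∑ d, Γ h hinv b c d x * T x a d

/-- Index lowering: η_a = h_{ab} η^b. -/
noncomputable def low (h : E3 → Fin 3 → Fin 3 → ℝ) (v : E3 → Fin 3 → ℝ)
    (x : E3) (a : Fin 3) : ℝ := ∑ b, h x a b * v x b

/-- Let η^a be a hypersurface-orthogonal Killing field of the Riemannian metric h
(in a coordinate patch U), with norm N = η^aη_a > 0, and let Ψ^a satisfy
L_η Ψ = 0, Ψ^a η_a = 0 and D_a Ψ^a = 0.  Then Ψ^{ab} = (2/N) Ψ^{(a} η^{b)} is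
symmetric, trace-free and divergence-free on U. -/
theorem stmt15 (U : Set E3) (hU : IsOpen U)
    (h hinv : E3 → Fin 3 → Fin 3 → ℝ) (η Ψ : E3 → Fin 3 → ℝ)
    -- smoothness of all fields on U
    (hsm : ∀ i j, ContDiffOn ℝ (⊤ : ℕ∞) (fun x => h x i j) U)
    (hsmi : ∀ i j, ContDiffOn ℝ (⊤ : ℕ∞) (fun x => hinv x i j) U)
    (hsmη : ∀ i, ContDiffOn ℝ (⊤ : ℕ∞) (fun x => η x i) U)
    (hsmΨ : ∀ i, ContDiffOn ℝ (⊤ : ℕ∞) (fun x => Ψ x i) U)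
    -- h is a symmetric metric with inverse hinv
    (hsym : ∀ x ∈ U, ∀ i j, h x i j = h x j i)
    (hinvh : ∀ x ∈ U, ∀ i j, ∑ k, hinv x i k * h x k j = if i = j then (1:ℝ) else 0)
    -- the norm η = η^a η_a is positive
    (hN : ∀ x ∈ U, 0 < ∑ a, ∑ b, h x a b * η x a * η x b)
    -- η^a is a Killing field: D_(a η_b) = 0
    (hKill : ∀ x ∈ U, ∀ a b,
      covC h hinv (low h η) a b x + covC h hinv (low h η) b a x = 0)
    -- η^a is hypersurface orthogonal: D_a η_b = −η_{[a} D_{b]} ln η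
    (hHO : ∀ x ∈ U, ∀ a b, covC h hinv (low h η) a b x =
      -(1/2) * (low h η x a *
          pd (fun y => Real.log (∑ c, ∑ d, h y c d * η y c * η y d)) b x
        - low h η x b *
          pd (fun y => Real.log (∑ c, ∑ d, h y c d * η y c * η y d)) a x))
    -- L_η Ψ^a = 0
    (hLie : ∀ x ∈ U, ∀ a,
      ∑ b, (η x b * pd (fun y => Ψ y a) b x - Ψ x b * pd (fun y => η y a) b x) = 0)
    -- Ψ^a η_a = 0
    (hperp : ∀ x ∈ U, ∑ a, Ψ x a * low h η x a = 0)
    -- D_a Ψ^a = 0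
    (hdiv : ∀ x ∈ U, ∑ a, covV h hinv Ψ a a x = 0) :
    -- conclusion about Ψ^{ab} = (2/η) Ψ^{(a} η^{b)}
    let N : E3 → ℝ := fun x => ∑ a, ∑ b, h x a b * η x a * η x b
    let T : E3 → Fin 3 → Fin 3 → ℝ := fun x a b => (Ψ x a * η x b + Ψ x b * η x a) / N x
    (∀ x ∈ U, ∀ a b, T x a b = T x b a) ∧
    (∀ x ∈ U, ∑ a, ∑ b, h x a b * T x a b = 0) ∧
    (∀ x ∈ U, ∀ b, ∑ a, covT2 h hinv T a a b x = 0) := by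
  intro N T
  refine ⟨fun x hx a b => by simp only [T]; ring, ?_, ?_⟩
  · intro x hx
    have hp := hperp x hx
    simp only [low, Finset.mul_sum] at hp
    have S1 : ∑ a, ∑ b, h x a b * Ψ x a * η x b = 0 := by
      rw [← hp]; congr 1; funext a; congr 1; funext b; ring
    have S2 : ∑ a, ∑ b, h x a b * Ψ x b * η x a = 0 := by
      rw [Finset.sum_comm]
      rw [← S1]; congr 1; funext a; congr 1; funext b
      rw [hsym x hx b a]
    have e1 : ∀ a b, h x a b * T x a b
        = h x a b * Ψ x a * η x b / N x + h x a b * Ψ x b * η x a / N x := by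
      intro a b; simp only [T]; ring
    simp only [e1, Finset.sum_add_distrib, ← Finset.sum_div, S1, S2]
    simp
  · intro x hx b
    have memU : U ∈ nhds x := hU.mem_nhds hx
    have dh : ∀ i j, DifferentiableAt ℝ (fun y => h y i j) x :=
      fun i j => ((hsm i j).contDiffAt memU).differentiableAt (by simp)
    have dη : ∀ i, DifferentiableAt ℝ (fun y => η y i) x :=
      fun i => ((hsmη i).contDiffAt memU).differentiableAt (by simp)
    have dΨ : ∀ i, DifferentiableAt ℝ (fun y => Ψ y i) x :=
      fun i => ((hsmΨ i).contDiffAt memU).differentiableAt (by simp)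
    have Hsym : ∀ i j, h x i j = h x j i := hsym x hx
    have dhsym : ∀ a i j, pd (fun y => h y i j) a x = pd (fun y => h y j i) a x :=
      fun a i j => pd_congr (Filter.eventually_of_mem memU fun y hy => hsym y hy i j) a
    have GH : ∀ i j, ∑ k, hinv x i k * h x k j = if i = j then (1:ℝ) else 0 := hinvh x hx
    -- matrix facts: hinv is a two-sided inverse and symmetric
    have matfacts : (∀ i j, ∑ k, h x i k * hinv x k j = if i = j then (1:ℝ) else 0)
        ∧ (∀ i j, hinv x i j = hinv x j i) := by
      set A : Matrix (Fin 3) (Fin 3) ℝ := Matrix.of (fun i j => h x i j) with hA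
      set B : Matrix (Fin 3) (Fin 3) ℝ := Matrix.of (fun i j => hinv x i j) with hB
      have hBA : B * A = 1 := by
        ext i j
        rw [Matrix.mul_apply]
        simpa [hA, hB, Matrix.one_apply] using GH i j
      have hAB : A * B = 1 := mul_eq_one_comm.mp hBA
      have hAT : A.transpose = A := by
        ext i j; simp only [Matrix.transpose_apply, hA, Matrix.of_apply]; exact Hsym j i
      have hBT : B.transpose = B := by
        have h1 : B.transpose * A = 1 := by
          rw [← hAT, ← Matrix.transpose_mul, hAB, Matrix.transpose_one]
        calc B.transpose = B.transpose * (A * B) := by rw [hAB, Matrix.mul_one]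
          _ = (B.transpose * A) * B := by rw [Matrix.mul_assoc]
          _ = B := by rw [h1, Matrix.one_mul]
      constructor
      · intro i j
        have := congrFun (congrFun hAB i) j
        rw [Matrix.mul_apply] at this
        simpa [hA, hB, Matrix.one_apply] using this
      · intro i j
        have := congrFun (congrFun hBT j) i
        simpa [hB] using this
    obtain ⟨HG, Gsym⟩ := matfacts
    -- contraction lemmas
    have contractG : ∀ (f : Fin 3 → ℝ) (c : Fin 3),
        ∑ d, hinv x c d * (∑ e, h x d e * f e) = f c := by
      intro f c
      have s1 : ∀ d, hinv x c d * (∑ e, h x d e * f e)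
          = ∑ e, (hinv x c d * h x d e) * f e := by
        intro d; rw [Finset.mul_sum]; exact sum3_congr fun e => by ring
      rw [sum3_congr s1, Finset.sum_comm]
      have s2 : ∀ e, ∑ d, (hinv x c d * h x d e) * f e
          = (if c = e then (1:ℝ) else 0) * f e := by
        intro e; rw [← Finset.sum_mul, GH c e]
      rw [sum3_congr s2]
      simp
    have contractR : ∀ (f : Fin 3 → ℝ) (j : Fin 3),
        ∑ d, (∑ e, hinv x d e * f e) * h x d j = f j := by
      intro f j
      have s1 : ∀ d, (∑ e, hinv x d e * f e) * h x d j
          = ∑ e, (hinv x e d * h x d j) * f e := by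
        intro d; rw [Finset.sum_mul]
        exact sum3_congr fun e => by rw [Gsym d e]; ring
      rw [sum3_congr s1, Finset.sum_comm]
      have s2 : ∀ e, ∑ d, (hinv x e d * h x d j) * f e
          = (if e = j then (1:ℝ) else 0) * f e := by
        intro e; rw [← Finset.sum_mul, GH e j]
      rw [sum3_congr s2]
      simp
    -- Christoffel symmetry
    have Γsym : ∀ a i j, Γ h hinv a i j x = Γ h hinv a j i x := by
      intro a i j
      unfold Γ
      congr 1
      apply sum3_congr
      intro d
      rw [dhsym i d j, dhsym j d i, dhsym d i j]
      ring
    -- metric compatibility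
    have compat : ∀ a i j, pd (fun y => h y i j) a x
        = ∑ d, (Γ h hinv d a i x * h x d j + Γ h hinv d a j x * h x i d) := by
      intro a i j
      have e1 : ∀ d, Γ h hinv d a i x * h x d j + Γ h hinv d a j x * h x i d
          = (1/2) * ((∑ e, hinv x d e *
              (pd (fun y => h y e i) a x + pd (fun y => h y a e) i x
                - pd (fun y => h y a i) e x)) * h x d j)
            + (1/2) * ((∑ e, hinv x d e *
              (pd (fun y => h y e j) a x + pd (fun y => h y a e) j x
                - pd (fun y => h y a j) e x)) * h x d i) := by
        intro d
        rw [Hsym i d]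
        unfold Γ
        ring
      rw [sum3_congr e1, Finset.sum_add_distrib, ← Finset.mul_sum, ← Finset.mul_sum,
        contractR (fun e => pd (fun y => h y e i) a x + pd (fun y => h y a e) i x
          - pd (fun y => h y a i) e x) j,
        contractR (fun e => pd (fun y => h y e j) a x + pd (fun y => h y a e) j x
          - pd (fun y => h y a j) e x) i]
      rw [dhsym a j i]
      ring
    set Dc : Fin 3 → Fin 3 → ℝ := fun a c => covC h hinv (low h η) a c x with hDcdef
    set Dv : Fin 3 → Fin 3 → ℝ := fun a c => covV h hinv η a c x with hDvdef
    set DΨv : Fin 3 → Fin 3 → ℝ := fun a c => covV h hinv Ψ a c x with hDΨdef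
    have Kas : ∀ a c, Dc a c = - Dc c a := by
      intro a c
      have := hKill x hx a c
      simp only [hDcdef]
      linarith
    have pdlow : ∀ a c, pd (fun y => low h η y c) a x
        = ∑ d, (pd (fun y => h y c d) a x * η x d + h x c d * pd (fun y => η y d) a x) := by
      intro a c
      rw [show (fun y => low h η y c) = fun y => ∑ d, h y c d * η y d from rfl,
        pd_sum (fun d => (dh c d).fun_mul (dη d)) a]
      exact sum3_congr fun d => pd_mul (dh c d) (dη d) a
    -- F2 : lowering commutes with covariant derivative
    have F2 : ∀ a c, Dc a c = ∑ d, h x c d * Dv a d := by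
      intro a c
      have lhs1 : Dc a c = ∑ d, (pd (fun y => h y c d) a x * η x d
            + h x c d * pd (fun y => η y d) a x)
          - ∑ d, Γ h hinv d a c x * low h η x d := by
        simp only [hDcdef]
        unfold covC
        rw [pdlow a c]
      have e1 : ∀ d, pd (fun y => h y c d) a x * η x d + h x c d * pd (fun y => η y d) a x
          = (∑ e, Γ h hinv e a c x * h x e d * η x d)
            + (∑ e, Γ h hinv e a d x * h x c e * η x d)
            + h x c d * pd (fun y => η y d) a x := by
        intro d
        rw [compat a c d, Finset.sum_add_distrib, add_mul, Finset.sum_mul, Finset.sum_mul]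
      have t1 : ∑ d, ∑ e, Γ h hinv e a c x * h x e d * η x d
          = ∑ e, Γ h hinv e a c x * low h η x e := by
        rw [Finset.sum_comm]
        apply sum3_congr
        intro e
        rw [show low h η x e = ∑ d, h x e d * η x d from rfl, Finset.mul_sum]
        exact sum3_congr fun d => by ring
      have t2 : ∑ d, ∑ e, Γ h hinv e a d x * h x c e * η x d
          = ∑ d, h x c d * (∑ e, Γ h hinv d a e x * η x e) := by
        rw [Finset.sum_comm]
        apply sum3_congr
        intro e
        rw [Finset.mul_sum]
        exact sum3_congr fun d => by ring
      have rhs1 : ∑ d, h x c d * Dv a d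
          = ∑ d, (h x c d * pd (fun y => η y d) a x
              + h x c d * (∑ e, Γ h hinv d a e x * η x e)) := by
        apply sum3_congr
        intro d
        simp only [hDvdef]
        unfold covV
        ring
      rw [lhs1, sum3_congr e1, Finset.sum_add_distrib, Finset.sum_add_distrib, t1, t2,
        rhs1, Finset.sum_add_distrib]
      ring
    -- inverse form of F2
    have F2' : ∀ a d, Dv a d = ∑ c, hinv x d c * Dc a c := by
      intro a d
      have : ∑ c, hinv x d c * Dc a c
          = ∑ c, hinv x d c * (∑ e, h x c e * Dv a e) := by
        exact sum3_congr fun c => by rw [F2 a c]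
      rw [this, contractG (fun e => Dv a e) d]
    -- trace of Dv vanishes
    have trDv : ∑ a, Dv a a = 0 := by
      have e1 : ∑ a, Dv a a = ∑ a, ∑ c, hinv x a c * Dc a c := sum3_congr fun a => F2' a a
      have e2 : ∑ a, ∑ c, hinv x a c * Dc a c = - ∑ a, ∑ c, hinv x a c * Dc a c := by
        nth_rewrite 1 [Finset.sum_comm]
        rw [← Finset.sum_neg_distrib]
        apply sum3_congr
        intro a
        rw [← Finset.sum_neg_distrib]
        apply sum3_congr
        intro c
        rw [Gsym c a, Kas c a]
        ring
      rw [e1]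
      linarith
    -- positivity of the norm
    set nx : ℝ := ∑ c, ∑ d, h x c d * η x c * η x d with hnxdef
    have hnx : 0 < nx := by rw [hnxdef]; exact hN x hx
    have hnx' : nx ≠ 0 := ne_of_gt hnx
    have dlow : ∀ c, DifferentiableAt ℝ (fun y => low h η y c) x := by
      intro c
      rw [show (fun y => low h η y c) = fun y => ∑ d, h y c d * η y d from rfl]
      exact DifferentiableAt.fun_sum fun d _ => (dh c d).mul (dη d)
    have dLN : DifferentiableAt ℝ (fun y => ∑ c, ∑ d, h y c d * η y c * η y d) x :=
      DifferentiableAt.fun_sum fun c _ =>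
        DifferentiableAt.fun_sum fun d _ => ((dh c d).mul (dη c)).mul (dη d)
    -- the derivative of the norm function
    have pdLN : ∀ a, pd (fun y => ∑ c, ∑ d, h y c d * η y c * η y d) a x
        = 2 * ∑ c, η x c * Dc a c := by
      intro a
      have LNeq : (fun y => ∑ c, ∑ d, h y c d * η y c * η y d)
          = fun y => ∑ c, low h η y c * η y c := by
        funext y
        apply sum3_congr
        intro c
        rw [show low h η y c = ∑ d, h y c d * η y d from rfl, Finset.sum_mul]
        exact sum3_congr fun d => by ring
      rw [LNeq, pd_sum (fun c => (dlow c).fun_mul (dη c)) a]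
      have step : ∀ c, pd (fun y => low h η y c * η y c) a x
          = pd (fun y => low h η y c) a x * η x c
            + low h η x c * pd (fun y => η y c) a x :=
        fun c => pd_mul (dlow c) (dη c) a
      have e1 : ∀ c, pd (fun y => low h η y c) a x
          = Dc a c + ∑ d, Γ h hinv d a c x * low h η x d := by
        intro c; simp only [hDcdef]; unfold covC; ring
      have e2 : ∀ c, pd (fun y => η y c) a x
          = Dv a c - ∑ d, Γ h hinv c a d x * η x d := by
        intro c; simp only [hDvdef]; unfold covV; ring
      have e3 : ∀ c, pd (fun y => low h η y c * η y c) a x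
          = Dc a c * η x c + (∑ d, Γ h hinv d a c x * low h η x d * η x c)
            + low h η x c * Dv a c - ∑ d, low h η x c * (Γ h hinv c a d x * η x d) := by
        intro c
        rw [step c, e1 c, e2 c, add_mul, mul_sub, Finset.sum_mul, Finset.mul_sum]
        ring
      rw [sum3_congr e3]
      have X : ∑ c, ∑ d, Γ h hinv d a c x * low h η x d * η x c
          = ∑ c, ∑ d, low h η x c * (Γ h hinv c a d x * η x d) := by
        rw [Finset.sum_comm]
        apply sum3_congr; intro c; apply sum3_congr; intro d; ring
      have A2 : ∑ c, low h η x c * Dv a c = ∑ c, η x c * Dc a c := by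
        have r1 : ∑ c, η x c * Dc a c = ∑ c, ∑ d, η x c * (h x c d * Dv a d) := by
          apply sum3_congr; intro c; rw [F2 a c, Finset.mul_sum]
        rw [r1, Finset.sum_comm]
        apply sum3_congr
        intro c
        rw [show low h η x c = ∑ d, h x c d * η x d from rfl, Finset.sum_mul]
        apply sum3_congr
        intro d
        rw [Hsym c d]
        ring
      have split : ∑ c, (Dc a c * η x c + (∑ d, Γ h hinv d a c x * low h η x d * η x c)
            + low h η x c * Dv a c - ∑ d, low h η x c * (Γ h hinv c a d x * η x d))
          = ∑ c, Dc a c * η x c + (∑ c, ∑ d, Γ h hinv d a c x * low h η x d * η x c)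
            + ∑ c, low h η x c * Dv a c
            - ∑ c, ∑ d, low h η x c * (Γ h hinv c a d x * η x d) := by
        rw [Finset.sum_sub_distrib, Finset.sum_add_distrib, Finset.sum_add_distrib]
      rw [split, X, A2]
      have : ∀ c, Dc a c * η x c = η x c * Dc a c := fun c => by ring
      rw [sum3_congr this]
      ring
    -- contraction of dN with η vanishes
    have F6 : ∑ a, η x a * pd (fun y => ∑ c, ∑ d, h y c d * η y c * η y d) a x = 0 := by
      have Qzero : ∑ a, ∑ c, η x a * η x c * Dc a c = 0 := by
        have e2 : ∑ a, ∑ c, η x a * η x c * Dc a c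
            = - ∑ a, ∑ c, η x a * η x c * Dc a c := by
          nth_rewrite 1 [Finset.sum_comm]
          rw [← Finset.sum_neg_distrib]
          apply sum3_congr
          intro a
          rw [← Finset.sum_neg_distrib]
          apply sum3_congr
          intro c
          rw [Kas c a]
          ring
        linarith
      have e : ∀ a, η x a * pd (fun y => ∑ c, ∑ d, h y c d * η y c * η y d) a x
          = 2 * ∑ c, η x a * η x c * Dc a c := by
        intro a
        rw [pdLN a, Finset.mul_sum, Finset.mul_sum, Finset.mul_sum]
        exact sum3_congr fun c => by ring
      rw [sum3_congr e, ← Finset.mul_sum, Qzero, mul_zero]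
    -- derivative of log of the norm
    have pdlog : ∀ a, pd (fun y => Real.log (∑ c, ∑ d, h y c d * η y c * η y d)) a x
        = pd (fun y => ∑ c, ∑ d, h y c d * η y c * η y d) a x / nx := by
      intro a
      rw [hnxdef]
      exact pd_log dLN (by rw [hnxdef] at hnx'; exact hnx') a
    set Sf : ℝ := ∑ a, Ψ x a * pd (fun y => ∑ c, ∑ d, h y c d * η y c * η y d) a x
      with hSfdef
    -- F7 : contraction of Ψ with Dc
    have F7 : ∀ c, ∑ a, Ψ x a * Dc a c = 1/2 * (low h η x c * Sf / nx) := by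
      intro c
      have e : ∀ a, Ψ x a * Dc a c
          = (Ψ x a * low h η x a) * (-(1/2) * (pd (fun y => ∑ c, ∑ d, h y c d * η y c * η y d) c x / nx))
            + (1/2) * low h η x c / nx
              * (Ψ x a * pd (fun y => ∑ c, ∑ d, h y c d * η y c * η y d) a x) := by
        intro a
        have := hHO x hx a c
        simp only [hDcdef]
        rw [this, pdlog a, pdlog c]
        ring
      rw [sum3_congr e, Finset.sum_add_distrib, ← Finset.sum_mul, ← Finset.mul_sum,
        hperp x hx, ← hSfdef]
      ring
    -- F8 : Lie derivative condition in covariant form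
    have F8 : ∀ c, ∑ a, η x a * DΨv a c = ∑ a, Ψ x a * Dv a c := by
      intro c
      have eL : ∀ a, η x a * DΨv a c
          = η x a * pd (fun y => Ψ y c) a x + ∑ d, η x a * (Γ h hinv c a d x * Ψ x d) := by
        intro a; simp only [hDΨdef]; unfold covV; rw [mul_add, Finset.mul_sum]
      have eR : ∀ a, Ψ x a * Dv a c
          = Ψ x a * pd (fun y => η y c) a x + ∑ d, Ψ x a * (Γ h hinv c a d x * η x d) := by
        intro a; simp only [hDvdef]; unfold covV; rw [mul_add, Finset.mul_sum]
      rw [sum3_congr eL, sum3_congr eR, Finset.sum_add_distrib, Finset.sum_add_distrib]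
      have lie := hLie x hx c
      rw [Finset.sum_sub_distrib] at lie
      have gam : ∑ a, ∑ d, η x a * (Γ h hinv c a d x * Ψ x d)
          = ∑ a, ∑ d, Ψ x a * (Γ h hinv c a d x * η x d) := by
        rw [Finset.sum_comm]
        apply sum3_congr; intro a; apply sum3_congr; intro d
        rw [Γsym c d a]
        ring
      rw [gam]
      linarith
    -- F9 : contraction of Ψ with Dv
    have F9 : ∀ c, ∑ a, Ψ x a * Dv a c = 1/2 * (η x c * Sf / nx) := by
      intro c
      have e : ∀ a, Ψ x a * Dv a c = ∑ d, hinv x c d * (Ψ x a * Dc a d) := by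
        intro a
        rw [F2' a c, Finset.mul_sum]
        exact sum3_congr fun d => by ring
      rw [sum3_congr e, Finset.sum_comm]
      have e2 : ∀ d, ∑ a, hinv x c d * (Ψ x a * Dc a d)
          = hinv x c d * (1/2 * (low h η x d * Sf / nx)) := by
        intro d; rw [← Finset.mul_sum, F7 d]
      rw [sum3_congr e2]
      have raise : ∑ d, hinv x c d * low h η x d = η x c := by
        have e3 : ∀ d, low h η x d = ∑ e, h x d e * η x e := fun d => rfl
        calc ∑ d, hinv x c d * low h η x d
            = ∑ d, hinv x c d * ∑ e, h x d e * η x e := sum3_congr fun d => by rw [e3 d]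
          _ = η x c := contractG (fun e => η x e) c
      calc ∑ d, hinv x c d * (1/2 * (low h η x d * Sf / nx))
          = ∑ d, (hinv x c d * low h η x d) * (1/2 * Sf / nx) :=
            sum3_congr fun d => by ring
        _ = (∑ d, hinv x c d * low h η x d) * (1/2 * Sf / nx) := by rw [Finset.sum_mul]
        _ = 1/2 * (η x c * Sf / nx) := by rw [raise]; ring
    -- the key pointwise identity
    have key : ∀ a, covT2 h hinv
        (fun z a b => (Ψ z a * η z b + Ψ z b * η z a) / ∑ c, ∑ d, h z c d * η z c * η z d)
        a a b x
        = (η x b * DΨv a a + Ψ x a * Dv a b + Ψ x b * Dv a a + η x a * DΨv a b) / nx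
          - (Ψ x a * η x b + Ψ x b * η x a)
            * pd (fun y => ∑ c, ∑ d, h y c d * η y c * η y d) a x / nx^2 := by
      intro a
      have dnum : DifferentiableAt ℝ (fun y => Ψ y a * η y b + Ψ y b * η y a) x :=
        ((dΨ a).mul (dη b)).add ((dΨ b).mul (dη a))
      have hnxne : (∑ c, ∑ d, h x c d * η x c * η x d) ≠ 0 := by
        rw [hnxdef] at hnx'; exact hnx'
      have pdT : pd (fun y => (Ψ y a * η y b + Ψ y b * η y a)
            / ∑ c, ∑ d, h y c d * η y c * η y d) a x
          = ((pd (fun y => Ψ y a) a x * η x b + Ψ x a * pd (fun y => η y b) a x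
              + (pd (fun y => Ψ y b) a x * η x a + Ψ x b * pd (fun y => η y a) a x))
                * (∑ c, ∑ d, h x c d * η x c * η x d)
             - (Ψ x a * η x b + Ψ x b * η x a)
                * pd (fun y => ∑ c, ∑ d, h y c d * η y c * η y d) a x)
            / (∑ c, ∑ d, h x c d * η x c * η x d)^2 := by
        rw [pd_div dnum dLN hnxne a,
          pd_add ((dΨ a).fun_mul (dη b)) ((dΨ b).fun_mul (dη a)) a,
          pd_mul (dΨ a) (dη b) a, pd_mul (dΨ b) (dη a) a]
      unfold covT2
      rw [pdT]
      have g1 : ∑ d, Γ h hinv a a d x *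
            ((Ψ x d * η x b + Ψ x b * η x d) / ∑ c, ∑ d, h x c d * η x c * η x d)
          = ((∑ d, Γ h hinv a a d x * Ψ x d) * η x b
              + (∑ d, Γ h hinv a a d x * η x d) * Ψ x b)
            / ∑ c, ∑ d, h x c d * η x c * η x d := by
        calc ∑ d, Γ h hinv a a d x *
              ((Ψ x d * η x b + Ψ x b * η x d) / ∑ c, ∑ d, h x c d * η x c * η x d)
            = ∑ d, (Γ h hinv a a d x * Ψ x d * η x b / (∑ c, ∑ d, h x c d * η x c * η x d)
                + Γ h hinv a a d x * η x d * Ψ x b / (∑ c, ∑ d, h x c d * η x c * η x d)) :=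
              sum3_congr fun d => by ring
          _ = _ := by
              rw [Finset.sum_add_distrib, ← Finset.sum_div, ← Finset.sum_div,
                ← Finset.sum_mul, ← Finset.sum_mul, ← add_div]
      have g2 : ∑ d, Γ h hinv b a d x *
            ((Ψ x a * η x d + Ψ x d * η x a) / ∑ c, ∑ d, h x c d * η x c * η x d)
          = (Ψ x a * (∑ d, Γ h hinv b a d x * η x d)
              + (∑ d, Γ h hinv b a d x * Ψ x d) * η x a)
            / ∑ c, ∑ d, h x c d * η x c * η x d := by
        calc ∑ d, Γ h hinv b a d x *
              ((Ψ x a * η x d + Ψ x d * η x a) / ∑ c, ∑ d, h x c d * η x c * η x d)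
            = ∑ d, (Ψ x a * (Γ h hinv b a d x * η x d) / (∑ c, ∑ d, h x c d * η x c * η x d)
                + Γ h hinv b a d x * Ψ x d * η x a / (∑ c, ∑ d, h x c d * η x c * η x d)) :=
              sum3_congr fun d => by ring
          _ = _ := by
              rw [Finset.sum_add_distrib, ← Finset.sum_div, ← Finset.sum_div,
                ← Finset.mul_sum, ← Finset.sum_mul, ← add_div]
      rw [g1, g2, hnxdef]
      simp only [hDΨdef, hDvdef]
      unfold covV
      field_simp
      ring
    -- assemble everything
    show ∑ a, covT2 h hinv
        (fun z a b => (Ψ z a * η z b + Ψ z b * η z a) / ∑ c, ∑ d, h z c d * η z c * η z d)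
        a a b x = 0
    rw [sum3_congr key]
    have sumsplit : ∑ a, ((η x b * DΨv a a + Ψ x a * Dv a b + Ψ x b * Dv a a
            + η x a * DΨv a b) / nx
          - (Ψ x a * η x b + Ψ x b * η x a)
            * pd (fun y => ∑ c, ∑ d, h y c d * η y c * η y d) a x / nx^2)
        = (η x b * (∑ a, DΨv a a) + (∑ a, Ψ x a * Dv a b) + Ψ x b * (∑ a, Dv a a)
            + (∑ a, η x a * DΨv a b)) / nx
          - ((∑ a, Ψ x a * pd (fun y => ∑ c, ∑ d, h y c d * η y c * η y d) a x) * η x b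
            + Ψ x b * (∑ a, η x a * pd (fun y => ∑ c, ∑ d, h y c d * η y c * η y d) a x))
            / nx^2 := by
      rw [Finset.sum_sub_distrib, ← Finset.sum_div, ← Finset.sum_div,
        Finset.sum_add_distrib, Finset.sum_add_distrib, Finset.sum_add_distrib,
        ← Finset.mul_sum, ← Finset.mul_sum]
      congr 1
      have : ∀ a, (Ψ x a * η x b + Ψ x b * η x a)
            * pd (fun y => ∑ c, ∑ d, h y c d * η y c * η y d) a x
          = Ψ x a * pd (fun y => ∑ c, ∑ d, h y c d * η y c * η y d) a x * η x b
            + Ψ x b * (η x a * pd (fun y => ∑ c, ∑ d, h y c d * η y c * η y d) a x) :=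
        fun a => by ring
      rw [sum3_congr this, Finset.sum_add_distrib, ← Finset.sum_mul, ← Finset.mul_sum]
    rw [sumsplit]
    have hdivx : ∑ a, DΨv a a = 0 := by simp only [hDΨdef]; exact hdiv x hx
    have F84 : ∑ a, η x a * DΨv a b = 1/2 * (η x b * Sf / nx) := by rw [F8 b, F9 b]
    rw [hdivx, trDv, F9 b, F84, F6, ← hSfdef]
    field_simp
    ring







end
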